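/- Let G be a path-bipartite graph of sets A and B with min{|A|,|B|} ≤ 1. Then G is connected if and only if G is path-complete. -/

import Mathlib

open SimpleGraph Set

/-- A "graph on a vertex subset": a subgraph of the complete graph on `V`. -/
abbrev Gr (V : Type) := SimpleGraph.Subgraph (⊤ : SimpleGraph V)

/-- `P` is the path graph `(u₀, …, u_k)` whose vertex list is `l`. -/
def IsPathGraphOn {V : Type} (l : List V) (P : Gr V) : Prop :=
  l.Nodup ∧ 2 ≤ l.length ∧ P.verts = {v | v ∈ l} ∧
    ∀ x y, P.Adj x y ↔ ([x, y] <:+: l ∨ [y, x] <:+: l)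

/-- `P` is a path graph. -/
def IsPathGraph {V : Type} (P : Gr V) : Prop := ∃ l, IsPathGraphOn l P

/-- `P` is a path joining `a` and `b`. -/
def IsPathFrom {V : Type} (P : Gr V) (a b : V) : Prop :=
  ∃ l, IsPathGraphOn l P ∧
    ((l.head? = some a ∧ l.getLast? = some b) ∨ (l.head? = some b ∧ l.getLast? = some a))

/-- `P` is a be-path of `A` and `B`: a path with vertices in `A ∪ B` having a unique
edge `{a₀, b₀}` meeting both `A` and `B`. -/
def IsBePath {V : Type} (A B : Set V) (P : Gr V) : Prop :=
  IsPathGraph P ∧ P.verts ⊆ A ∪ B ∧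
    ∃ a₀ b₀, a₀ ∈ A ∧ b₀ ∈ B ∧ P.Adj a₀ b₀ ∧
      ∀ x y, P.Adj x y → x ∈ A → y ∈ B → x = a₀ ∧ y = b₀

/-- `G` is a path-bipartite graph of `A` and `B`: `A`, `B` are disjoint nonempty subsets of
`V(G)` and `G` is the union of a nonempty family of be-paths of `A` and `B`. -/
def IsPathBipartite {V : Type} (A B : Set V) (G : Gr V) : Prop :=
  A.Nonempty ∧ B.Nonempty ∧ Disjoint A B ∧ A ⊆ G.verts ∧ B ⊆ G.verts ∧
    ∃ Ps : Set (Gr V), Ps.Nonempty ∧ (∀ P ∈ Ps, IsBePath A B P) ∧ G = sSup Ps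

/-- `G` is connected: any two distinct vertices are joined by a path in `G`. -/
def ConnectedGr {V : Type} (G : Gr V) : Prop :=
  ∀ u v, u ∈ G.verts → v ∈ G.verts → u ≠ v → ∃ P, P ≤ G ∧ IsPathFrom P u v

/-- `H` is a connected component of `G`: a maximal connected subgraph. -/
def IsComponent {V : Type} (G H : Gr V) : Prop :=
  H ≤ G ∧ ConnectedGr H ∧ ∀ Γ, Γ ≤ G → ConnectedGr Γ → H ≤ Γ → H = Γ

/-- Some `a ∈ A` and `b ∈ B` are joined by a be-path of `A` and `B` contained in `G`,
i.e. `(a, b) ∈ 𝓑_path(G)`. -/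
def BePathJoined {V : Type} (G : Gr V) (A B : Set V) (a b : V) : Prop :=
  ∃ P, P ≤ G ∧ IsBePath A B P ∧ IsPathFrom P a b

/-- `G` is path-complete: every `(a,b) ∈ A × B` is joined by a be-path in `G`. -/
def PathComplete {V : Type} (G : Gr V) (A B : Set V) : Prop :=
  ∀ a ∈ A, ∀ b ∈ B, BePathJoined G A B a b

/-- The induced-bipartite subgraph `G[A, B]`. -/
def induceBip {V : Type} (G : Gr V) (A B : Set V) : Gr V where
  verts := A ∪ B
  Adj x y := G.Adj x y ∧ ((x ∈ A ∧ y ∈ B) ∨ (x ∈ B ∧ y ∈ A))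
  adj_sub h := G.adj_sub h.1
  edge_vert h := h.2.elim (fun hh => Or.inl hh.1) (fun hh => Or.inr hh.1)
  symm := ⟨fun x y h => ⟨h.1.symm, h.2.elim (fun hh => Or.inr ⟨hh.2, hh.1⟩) (fun hh => Or.inl ⟨hh.2, hh.1⟩)⟩⟩

/-- `d` is a semimetric. -/
def IsSemimetric {X : Type} (d : X → X → ℝ) : Prop :=
  (∀ x y, 0 ≤ d x y) ∧ (∀ x y, d x y = d y x) ∧ ∀ x y, d x y = 0 ↔ x = y

/-- `d` is a metric. -/
def IsMetric {X : Type} (d : X → X → ℝ) : Prop :=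
  IsSemimetric d ∧ ∀ x y z, d x y ≤ d x z + d z y

/-- `d` is an ultrametric. -/
def IsUltrametric {X : Type} (d : X → X → ℝ) : Prop :=
  IsSemimetric d ∧ ∀ x y z, d x y ≤ max (d x z) (d z y)

/-- `dist(A, B) = inf{d(a,b) : a ∈ A, b ∈ B}`. -/
noncomputable def setDist {X : Type} (d : X → X → ℝ) (A B : Set X) : ℝ :=
  sInf {r | ∃ a ∈ A, ∃ b ∈ B, d a b = r}

/-- `A` is a proximinal subset: every point has a best approximation in `A`. -/
def ProximinalSet {X : Type} (d : X → X → ℝ) (A : Set X) : Prop :=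
  ∀ x, ∃ a₀ ∈ A, d x a₀ = setDist d {x} A

/-- `G` is path-proximinal for `A` and `B` w.r.t. the semimetric `d` on `X = A ∪ B`. -/
def IsPathProximinal {X : Type} (d : X → X → ℝ) (A B : Set X) (G : Gr X) : Prop :=
  IsPathBipartite A B G ∧ ProximinalSet d A ∧ ProximinalSet d B ∧
    ∀ x ∈ A ∪ B, ∀ y ∈ A ∪ B, x ≠ y → (G.Adj x y ↔ d x y ≤ setDist d A B)

/-- `G` is a proximinal bipartite graph with parts `A` and `B` for `(X, d)`. -/
def IsProximinalGraph {X : Type} (d : X → X → ℝ) (A B : Set X) (G : Gr X) : Prop :=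
  A.Nonempty ∧ B.Nonempty ∧ Disjoint A B ∧ G.verts = A ∪ B ∧
    (∀ x y, G.Adj x y → (x ∈ A ∧ y ∈ B) ∨ (x ∈ B ∧ y ∈ A)) ∧
    ProximinalSet d A ∧ ProximinalSet d B ∧
    ∀ a ∈ A, ∀ b ∈ B, (G.Adj a b ↔ d a b = setDist d A B)


section Aux

variable {V : Type}

lemma infix_rev {α : Type*} {l' l : List α} (h : l' <:+: l) : l'.reverse <:+: l.reverse := by
  obtain ⟨s, t, rfl⟩ := h
  exact ⟨t.reverse, s.reverse, by simp⟩

lemma isPathGraphOn_reverse {l : List V} {P : Gr V} (h : IsPathGraphOn l P) :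
    IsPathGraphOn l.reverse P := by
  obtain ⟨hnd, hlen, hv, hadj⟩ := h
  refine ⟨by simpa using hnd, by simpa using hlen, by simpa [Set.ext_iff] using hv, fun x y => ?_⟩
  rw [hadj]
  constructor
  · rintro (h | h)
    · exact Or.inr (by simpa using infix_rev h)
    · exact Or.inl (by simpa using infix_rev h)
  · rintro (h | h)
    · exact Or.inr (by simpa using infix_rev h)
    · exact Or.inl (by simpa using infix_rev h)

/-- The path subgraph on a list. -/
def pathGr (l : List V) : Gr V where
  verts := {v | v ∈ l}
  Adj x y := x ≠ y ∧ ([x, y] <:+: l ∨ [y, x] <:+: l)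
  adj_sub h := h.1
  edge_vert h := by
    rcases h.2 with h | h
    · exact h.subset (by simp)
    · exact h.subset (by simp)
  symm := ⟨fun x y h => ⟨h.1.symm, h.2.symm⟩⟩

lemma chain'_of_consec {α : Type*} (R : α → α → Prop) :
    ∀ l : List α, (∀ x y, [x, y] <:+: l → R x y) → l.Chain' R
  | [], _ => List.IsChain.nil
  | [_], _ => List.isChain_singleton _
  | a :: b :: t, h =>
    List.IsChain.cons_cons (h a b ⟨[], t, rfl⟩)
      (chain'_of_consec R (b :: t) fun x y hxy =>
        h x y (hxy.trans (List.suffix_cons a (b :: t)).isInfix))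

lemma reachable_chain {G : SimpleGraph V} :
    ∀ (l : List V) (h : l ≠ []), l.Chain' G.Adj → G.Reachable (l.head h) (l.getLast h)
  | [a], _, _ => Reachable.refl a
  | a :: b :: t, _, hc => by
    rw [List.getLast_cons (by simp)]
    exact (Adj.reachable (List.isChain_cons_cons.mp hc).1).trans
      (reachable_chain (b :: t) (by simp) (List.isChain_cons_cons.mp hc).2)

lemma cons_support_mem_verts {G : Gr V} :
    ∀ {u v w : V} (h : G.spanningCoe.Adj u v) (W : G.spanningCoe.Walk v w),
      ∀ x ∈ (SimpleGraph.Walk.cons h W).support, x ∈ G.verts := by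
  intro u v w h W
  induction W generalizing u with
  | nil =>
    intro x hx
    simp only [SimpleGraph.Walk.support_cons, SimpleGraph.Walk.support_nil,
      List.mem_cons, List.mem_singleton] at hx
    rcases hx with rfl | hx
    · exact G.edge_vert h
    · rcases hx with rfl | hx
      · exact G.edge_vert h.symm
      · simp at hx
  | cons h' W' ih =>
    intro x hx
    rw [SimpleGraph.Walk.support_cons, List.mem_cons] at hx
    rcases hx with rfl | hx
    · exact G.edge_vert h
    · exact ih h' x hx

lemma ne_of_infix_pair {α : Type*} {x y : α} {l : List α} (hnd : l.Nodup)
    (h : [x, y] <:+: l) : x ≠ y := by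
  have h2 : [x, y].Nodup := h.sublist.nodup hnd
  simpa using h2

lemma exists_pathFrom_of_walk {G : Gr V} {u v : V} (W : G.spanningCoe.Walk u v)
    (hp : W.IsPath) (hne : u ≠ v) : ∃ P, P ≤ G ∧ IsPathFrom P u v := by
  have hchain : W.support.Chain' G.Adj := W.isChain_adj_support
  have hnd : W.support.Nodup := hp.support_nodup
  refine ⟨pathGr W.support, ⟨?_, ?_⟩, W.support, ⟨hnd, ?_, rfl, ?_⟩, Or.inl ⟨?_, ?_⟩⟩
  · -- verts ⊆ G.verts
    intro x hx
    cases W with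
    | nil => exact absurd rfl hne
    | cons h W' => exact cons_support_mem_verts h W' x hx
  · -- adj sub
    rintro x y ⟨hxy, hinf | hinf⟩
    · exact List.isChain_pair.mp (hchain.infix hinf)
    · exact (List.isChain_pair.mp (hchain.infix hinf)).symm
  · -- length
    cases W with
    | nil => exact absurd rfl hne
    | cons h W' => simp [SimpleGraph.Walk.support_cons]
  · -- adj iff
    intro x y
    constructor
    · exact fun h => h.2
    · rintro (h | h)
      · exact ⟨ne_of_infix_pair hnd h, Or.inl h⟩
      · exact ⟨(ne_of_infix_pair hnd h).symm, Or.inr h⟩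
  · rw [W.support_eq_cons]; rfl
  · rw [List.getLast?_eq_getLast_of_ne_nil W.support_ne_nil, W.getLast_support]

end Aux

lemma neighbor_unique {V : Type} {a y z : V} {t : List V} (hnd : (a :: y :: t).Nodup)
    (h : [a, z] <:+: (a :: y :: t) ∨ [z, a] <:+: (a :: y :: t)) : z = y := by
  have hamem : a ∉ y :: t := (List.nodup_cons.mp hnd).1
  rcases h with ⟨s, u, hs⟩ | ⟨s, u, hs⟩
  · cases s with
    | nil =>
      simp only [List.nil_append, List.cons_append, List.cons.injEq] at hs
      exact hs.2.1
    | cons c s' =>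
      simp only [List.cons_append, List.cons.injEq] at hs
      rw [← hs.2] at hamem
      exact absurd (by simp) hamem
  · cases s with
    | nil =>
      simp only [List.nil_append, List.cons_append, List.cons.injEq] at hs
      obtain ⟨rfl, rfl, rfl⟩ := hs
      exact absurd (by simp) hamem
    | cons c s' =>
      simp only [List.cons_append, List.cons.injEq] at hs
      rw [← hs.2] at hamem
      exact absurd (by simp) hamem

lemma reachable_of_pathFrom {V : Type} {G P : Gr V} {a b : V} (hPG : P ≤ G)
    (h : IsPathFrom P a b) : G.spanningCoe.Reachable a b := by
  obtain ⟨l, ⟨hnd, hlen, hv, hadj⟩, hends⟩ := h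
  have hl : l ≠ [] := by rintro rfl; simp at hlen
  have hchain : l.Chain' G.spanningCoe.Adj :=
    chain'_of_consec _ l fun x y hxy => hPG.2 ((hadj x y).mpr (Or.inl hxy))
  have hr := reachable_chain l hl hchain
  have hh := List.head?_eq_head hl
  have hg := List.getLast?_eq_getLast_of_ne_nil hl
  rcases hends with ⟨h1, h2⟩ | ⟨h1, h2⟩
  · rw [h1] at hh; rw [h2] at hg
    rwa [← Option.some_inj.mp hh, ← Option.some_inj.mp hg] at hr
  · rw [h1] at hh; rw [h2] at hg
    rw [← Option.some_inj.mp hh, ← Option.some_inj.mp hg] at hr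
    exact hr.symm

lemma isPathFrom_swap {V : Type} {P : Gr V} {a b : V} (h : IsPathFrom P a b) :
    IsPathFrom P b a := by
  obtain ⟨l, hl, hor⟩ := h
  exact ⟨l, hl, hor.symm⟩

lemma isBePath_swap {V : Type} {A B : Set V} {P : Gr V} (h : IsBePath A B P) :
    IsBePath B A P := by
  obtain ⟨h1, h2, a₀, b₀, ha, hb, hadj, huniq⟩ := h
  refine ⟨h1, by rwa [Set.union_comm], b₀, a₀, hb, ha, hadj.symm, ?_⟩
  intro x y hxy hxB hyA
  obtain ⟨h1', h2'⟩ := huniq y x hxy.symm hyA hxB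
  exact ⟨h2', h1'⟩

lemma isPathBipartite_swap {V : Type} {A B : Set V} {G : Gr V} (h : IsPathBipartite A B G) :
    IsPathBipartite B A G := by
  obtain ⟨h1, h2, h3, h4, h5, Ps, h6, h7, h8⟩ := h
  exact ⟨h2, h1, h3.symm, h5, h4, Ps, h6, fun P hP => isBePath_swap (h7 P hP), h8⟩

lemma pathComplete_swap {V : Type} {A B : Set V} {G : Gr V} (h : PathComplete G A B) :
    PathComplete G B A := by
  intro b hb a ha
  obtain ⟨P, h1, h2, h3⟩ := h a ha b hb
  exact ⟨P, h1, isBePath_swap h2, isPathFrom_swap h3⟩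

lemma main_lemma {V : Type} (G : Gr V) (A B : Set V) (hG : IsPathBipartite A B G)
    (hA : A.Subsingleton) : ConnectedGr G ↔ PathComplete G A B := by
  obtain ⟨⟨a, ha⟩, hBne, hdisj, hAv, hBv, Ps, hPsne, hPs, hGeq⟩ := hG
  have hGverts : G.verts ⊆ A ∪ B := by
    rw [hGeq, SimpleGraph.Subgraph.verts_sSup]
    exact Set.iUnion₂_subset fun P hP => (hPs P hP).2.1
  constructor
  · intro hconn x hx b hb
    have hxa : x = a := hA hx ha
    subst hxa
    have hab : x ≠ b := fun h => Set.disjoint_left.mp hdisj hx (h ▸ hb)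
    obtain ⟨P, hPG, l0, hl0, hor⟩ := hconn x b (hAv hx) (hBv hb) hab
    obtain ⟨l, hl, hh, ht⟩ : ∃ l, IsPathGraphOn l P ∧ l.head? = some x ∧ l.getLast? = some b := by
      rcases hor with ⟨h1, h2⟩ | ⟨h1, h2⟩
      · exact ⟨l0, hl0, h1, h2⟩
      · exact ⟨l0.reverse, isPathGraphOn_reverse hl0,
          by rwa [← List.getLast?_eq_head?_reverse],
          by rwa [← List.head?_eq_getLast?_reverse]⟩
    obtain ⟨hnd, hlen, hv, hadj⟩ := hl
    obtain ⟨y, t, rfl⟩ : ∃ y t, l = x :: y :: t := by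
      match l, hh, hlen with
      | [], hh, hlen => simp at hlen
      | [c], _, hlen => simp at hlen
      | c :: y :: t, hh, _ =>
        have hcx : c = x := by simpa using hh
        exact ⟨y, t, by rw [hcx]⟩
    have hyP : y ∈ P.verts := by rw [hv]; simp
    have hyx : y ≠ x := by
      rintro rfl
      exact (List.nodup_cons.mp hnd).1 List.mem_cons_self
    have hyB : y ∈ B := by
      rcases (hPG.1.trans hGverts) hyP with hyA | hyB
      · exact absurd (hA hyA hx) hyx
      · exact hyB
    have hAdjxy : P.Adj x y := (hadj x y).mpr (Or.inl ⟨[], t, rfl⟩)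
    refine ⟨P, hPG, ⟨⟨x :: y :: t, hnd, hlen, hv, hadj⟩, hPG.1.trans hGverts, x, y, hx, hyB,
      hAdjxy, ?_⟩, x :: y :: t, ⟨hnd, hlen, hv, hadj⟩, Or.inl ⟨hh, ht⟩⟩
    intro p q hpq hpA hqB
    have hpx : p = x := (hA hpA ha).trans (hA hx ha).symm
    subst hpx
    exact ⟨rfl, neighbor_unique hnd ((hadj p q).mp hpq)⟩
  · intro hpc u v hu hv huv
    have key : ∀ w ∈ G.verts, G.spanningCoe.Reachable a w := by
      intro w hw
      rcases hGverts hw with hwA | hwB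
      · rw [hA hwA ha]
      · obtain ⟨P, hPG, _, hpf⟩ := hpc a ha w hwB
        exact reachable_of_pathFrom hPG hpf
    obtain ⟨W⟩ := ((key u hu).symm.trans (key v hv))
    classical
    exact exists_pathFrom_of_walk (W.toPath : G.spanningCoe.Walk u v) W.toPath.2 huv

theorem stmt7 {V : Type} (G : Gr V) (A B : Set V) (hG : IsPathBipartite A B G)
    (hcard : A.Subsingleton ∨ B.Subsingleton) :
    ConnectedGr G ↔ PathComplete G A B := by
  rcases hcard with hA | hB
  · exact main_lemma G A B hG hA
  · rw [main_lemma G B A (isPathBipartite_swap hG) hB]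
    exact ⟨pathComplete_swap, pathComplete_swap⟩
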